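/- Under the extended ordering invariant, if A[i].val <_i v for some cell i, then for all cells j cyclically strictly between i and h(v) (i.e., i+1 ≤ j ≤ h(v)−1), A[j].val <_j v, and for all i ≤ j ≤ h(v)−1, A[j].next <_j v or h(A[j].next) = j+1. -/

import Mathlib

/-- The rank of `v` at cell `i`: the cyclic distance `(i - h v) mod m`. -/
def rnk {U : Type*} {m : ℕ} (h : U → Fin m) (v : U) (i : Fin m) : ℕ :=
  ((i : ℕ) + m - (h v : ℕ)) % m

/-- Cyclic distance from `a` to `b`, going forward, modulo `m`. -/
def cdist {m : ℕ} (a b : Fin m) : ℕ :=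
  ((b : ℕ) + m - (a : ℕ)) % m

/-- Robin Hood priority: `a >_i b` iff `rank(a,i) > rank(b,i)`, or equal ranks and `a > b`. -/
def prioGT {U : Type*} [LinearOrder U] {m : ℕ} (h : U → Fin m) (i : Fin m) (a b : U) : Prop :=
  rnk h a i > rnk h b i ∨ (rnk h a i = rnk h b i ∧ a > b)

/-- Priority extended to `Option U`: `none` is strictly below every `some v`. -/
def oGT {U : Type*} [LinearOrder U] {m : ℕ} (h : U → Fin m) (i : Fin m) :
    Option U → Option U → Prop
  | some a, some b => prioGT h i a b
  | some _, none => True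
  | none, _ => False

/-- `x ≥_i y` : strictly higher priority, or equal. -/
def oGE {U : Type*} [LinearOrder U] {m : ℕ} (h : U → Fin m) (i : Fin m)
    (x y : Option U) : Prop :=
  oGT h i x y ∨ x = y

/-- The Robin Hood ordering invariant: if `v` is stored at cell `i`, then every cell `j`
on the cyclic interval from `h v` to `i` (exclusive of `i`) stores a value of priority
at least that of `v` at cell `j`. -/
def OrdInv {U : Type*} [LinearOrder U] {m : ℕ} (h : U → Fin m) (A : Fin m → Option U) : Prop :=
  ∀ i v, A i = some v → ∀ j, cdist (h v) j < cdist (h v) i → oGE h j (A j) (some v)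

/-- Cell marks: stable, insert in progress, delete in progress. -/
inductive Mark
  | S | I | D
deriving DecidableEq

/-- A table cell: (value slot, lookahead slot, mark). -/
abbrev Cell (U : Type*) := Option U × Option U × Mark

/-- The extended ordering invariant for a table with lookahead. -/
def ExtInv {U : Type*} [LinearOrder U] {m : ℕ} [NeZero m] (h : U → Fin m)
    (A : Fin m → Cell U) : Prop :=
  -- (a) ordering invariant for the value slots
  (∀ i v, (A i).1 = some v → ∀ j, cdist (h v) j < cdist (h v) i →
    oGE h j ((A j).1) (some v)) ∧
  -- (b) A[i].next ≥_{i+1} A[i+1].val, or h(A[i].next) = i+1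
  (∀ i : Fin m, oGE h (i + 1) ((A i).2.1) ((A (i + 1)).1) ∨
    (∃ w, (A i).2.1 = some w ∧ h w = i + 1)) ∧
  -- (c) A[i].val ≥_i A[i].next, or (h(A[i].next) = i+1 and A[i].next ≥_{i+1} A[i+1].val)
  (∀ i : Fin m, oGE h i ((A i).1) ((A i).2.1) ∨
    ((∃ w, (A i).2.1 = some w ∧ h w = i + 1) ∧
      oGE h (i + 1) ((A i).2.1) ((A (i + 1)).1)))

/-- The (relevant part of the) stability invariant: a stable cell's lookahead slot
agrees with the value slot of the next cell. -/
def StableInv {U : Type*} {m : ℕ} [NeZero m] (A : Fin m → Cell U) : Prop :=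
  ∀ i : Fin m, (A i).2.2 = Mark.S → (A i).2.1 = (A (i + 1)).1

/-- `v` is physically in the table: some cell's value or lookahead slot equals `v`. -/
def physIn {U : Type*} {m : ℕ} (A : Fin m → Cell U) (v : U) : Prop :=
  ∃ i : Fin m, (A i).1 = some v ∨ (A i).2.1 = some v

/-- `v` is logically in the table. -/
def logIn {U : Type*} [LinearOrder U] {m : ℕ} (h : U → Fin m)
    (A : Fin m → Cell U) (v : U) : Prop :=
  ∃ i : Fin m, (A i).1 = some v ∨
    ((A i).2.1 = some v ∧ oGE h i ((A i).1) (some v))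


/-!
Suppose a cell `j` strictly after `i` and before `h v` held some `u ≥_j v`. Then
`rank(u, j) ≥ rank(v, j) = rank(v, i) + d(i, j)`, so `i` lies on the probe path of `u` from `h u`
to `j`, and the ordering invariant gives `A[i].val ≥_i u`. Going back from `j` to `i` lowers the
ranks of `u` and `v` by the same amount, so `u ≥_i v`, contradicting `A[i].val <_i v`.
The claim about lookahead slots then follows from (c).
-/

section CyclicDistance

variable {m : ℕ}

lemma cdist_eq_ite (a b : Fin m) :
    cdist a b = if (a : ℕ) ≤ b then (b : ℕ) - a else (b : ℕ) + m - a := by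
  have := a.isLt
  unfold cdist
  split_ifs
  · rw [show (b : ℕ) + m - a = (b - a) + m by omega, Nat.add_mod_right,
      Nat.mod_eq_of_lt (by omega)]
  · exact Nat.mod_eq_of_lt (by omega)

lemma eq_of_cdist_eq_zero {a b : Fin m} (h : cdist a b = 0) : a = b := by
  have := a.isLt; have := b.isLt
  rw [cdist_eq_ite] at h
  split_ifs at h <;> ext <;> omega

lemma cdist_add_cdist_of_lt {a i j : Fin m} (h : cdist a i + cdist i j < m) :
    cdist a i + cdist i j = cdist a j := by
  have := a.isLt; have := i.isLt; have := j.isLt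
  simp only [cdist_eq_ite] at h ⊢
  split_ifs at h ⊢ <;> omega

lemma cdist_add_cdist_of_le {a i j : Fin m} (h : cdist i j ≤ cdist a j) :
    cdist a i + cdist i j = cdist a j := by
  have := a.isLt; have := i.isLt; have := j.isLt
  simp only [cdist_eq_ite] at h ⊢
  split_ifs at h ⊢ <;> omega

lemma cdist_add_cdist_sub_one [NeZero m] (a i : Fin m) : cdist a i + cdist i (a - 1) = m - 1 := by
  obtain ⟨n, rfl⟩ := Nat.exists_eq_succ_of_ne_zero (NeZero.ne m)
  have := a.isLt; have := i.isLt
  rw [cdist_eq_ite, cdist_eq_ite, Fin.coe_sub_one]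
  split_ifs <;> simp only [Fin.ext_iff, Fin.val_zero] at * <;> omega

end CyclicDistance

section Priority

variable {U : Type*} {m : ℕ}

def prioKey (h : U → Fin m) (i : Fin m) : Option U → WithBot (ℕ ×ₗ U)
  | none => ⊥
  | some u => ((toLex (rnk h u i, u) : ℕ ×ₗ U) : WithBot (ℕ ×ₗ U))

lemma prioKey_injective (h : U → Fin m) (i : Fin m) : Function.Injective (prioKey h i) := by
  rintro (_ | a) (_ | b) e <;> simp_all [prioKey]

variable [LinearOrder U] {h : U → Fin m} {i j : Fin m}

lemma oGT_iff_prioKey_lt {x y : Option U} : oGT h i x y ↔ prioKey h i y < prioKey h i x := by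
  cases x <;> cases y <;> simp [oGT, prioGT, prioKey, Prod.Lex.toLex_lt_toLex, eq_comm]

lemma oGE_iff_prioKey_le {x y : Option U} : oGE h i x y ↔ prioKey h i y ≤ prioKey h i x := by
  rw [le_iff_lt_or_eq, oGE, oGT_iff_prioKey_lt, (prioKey_injective h i).eq_iff, eq_comm]

lemma oGT_of_oGT_of_oGE {x y z : Option U} (hxy : oGT h i x y) (hyz : oGE h i y z) :
    oGT h i x z :=
  oGT_iff_prioKey_lt.2 ((oGE_iff_prioKey_le.1 hyz).trans_lt (oGT_iff_prioKey_lt.1 hxy))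

lemma oGE_of_not_oGT {x y : Option U} (hxy : ¬ oGT h i x y) : oGE h i y x := by
  rw [oGT_iff_prioKey_lt, not_lt] at hxy
  exact oGE_iff_prioKey_le.2 hxy

lemma rnk_le_of_oGE {u v : U} (hge : oGE h i (some u) (some v)) : rnk h v i ≤ rnk h u i :=
  Prod.Lex.monotone_fst _ _ (WithBot.coe_le_coe.1 (oGE_iff_prioKey_le.1 hge))

lemma oGE_of_rnk_add {u v : U} {d : ℕ} (hu : rnk h u i + d = rnk h u j)
    (hv : rnk h v i + d = rnk h v j) (hge : oGE h j (some u) (some v)) :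
    oGE h i (some u) (some v) := by
  rw [oGE_iff_prioKey_le] at hge ⊢
  simp only [prioKey, WithBot.coe_le_coe, Prod.Lex.toLex_le_toLex] at hge ⊢
  rcases hge with hr | ⟨hr, hvu⟩
  · exact Or.inl (by omega)
  · exact Or.inr ⟨by omega, hvu⟩

end Priority

theorem OrdInv.oGT_of_cdist_le {U : Type*} [LinearOrder U] {m : ℕ} [NeZero m] {h : U → Fin m}
    {B : Fin m → Option U} (hB : OrdInv h B) {v : U} {i j : Fin m}
    (hlt : oGT h i (some v) (B i)) (hij : 1 ≤ cdist i j) (hjv : cdist i j ≤ cdist i (h v - 1)) :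
    oGT h j (some v) (B j) := by
  cases hBj : B j with
  | none => trivial
  | some u =>
    by_contra hvu
    have huv : oGE h j (some u) (some v) := oGE_of_not_oGT hvu
    have hv : cdist (h v) i + cdist i j = cdist (h v) j :=
      cdist_add_cdist_of_lt (by have := cdist_add_cdist_sub_one (h v) i; omega)
    have hrnk : cdist (h v) j ≤ cdist (h u) j := rnk_le_of_oGE huv
    have hu : cdist (h u) i + cdist i j = cdist (h u) j := cdist_add_cdist_of_le (by omega)
    have hBi : oGE h i (B i) (some u) := hB j u hBj i (by omega)
    exact not_lt_of_ge (oGE_iff_prioKey_le.1 (oGE_of_rnk_add hu hv huv))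
      (oGT_iff_prioKey_lt.1 (oGT_of_oGT_of_oGE hlt hBi))

theorem stmt16 {U : Type*} [LinearOrder U] {m : ℕ} [NeZero m] (h : U → Fin m)
    (A : Fin m → Cell U) (hext : ExtInv h A)
    (v : U) (i : Fin m)
    -- A[i].val <_i v
    (hlt : oGT h i (some v) ((A i).1)) :
    -- for all j with i+1 ≤ j ≤ h(v)-1 cyclically, A[j].val <_j v
    (∀ j : Fin m, 1 ≤ cdist i j → cdist i j ≤ cdist i (h v - 1) →
      oGT h j (some v) ((A j).1)) ∧
    -- for all j with i ≤ j ≤ h(v)-1 cyclically, A[j].next <_j v or h(A[j].next) = j+1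
    (∀ j : Fin m, cdist i j ≤ cdist i (h v - 1) →
      oGT h j (some v) ((A j).2.1) ∨ (∃ w, (A j).2.1 = some w ∧ h w = j + 1)) := by
  have hval : ∀ j, cdist i j ≤ cdist i (h v - 1) → oGT h j (some v) ((A j).1) := by
    intro j hj
    rcases Nat.eq_zero_or_pos (cdist i j) with hij | hij
    · rwa [← eq_of_cdist_eq_zero hij]
    · exact OrdInv.oGT_of_cdist_le (B := fun k => (A k).1) hext.1 hlt hij hj
  refine ⟨fun j _ => hval j, fun j hj => ?_⟩
  rcases hext.2.2 j with hc | ⟨hw, _⟩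
  · exact Or.inl (oGT_of_oGT_of_oGE (hval j hj) hc)
  · exact Or.inr hw
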